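/- arXiv:1607.00769 — 2 statements merged into one kernel-verified Lean document; each statement's English description precedes it below -/
import Mathlib

section
/- The first derivative of the sigmoid transform w vanishes to order p-1 at the endpoints: if v : ℝ → ℝ is smooth with v(T₁)=0 and v'(T₁) ≠ 0, and w(s) = T₁ + (T₂-T₁)·v(s)^p/(v(s)^p + (1-v(s))^p) with p ≥ 2 a natural number, then the k-th derivative of w vanishes at T₁ for all 1 ≤ k ≤ p-1. -/
open Topology
open scoped ContDiff

private lemma aux_vanish (a : ℝ) (u : ℝ → ℝ) (hu : ContDiff ℝ ∞ u) (hu0 : u a = 0) :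
    ∀ k m : ℕ, k < m → ∀ g : ℝ → ℝ, ∀ U : Set ℝ, IsOpen U → a ∈ U →
      ContDiffOn ℝ ∞ g U → iteratedDeriv k (fun s => u s ^ m * g s) a = 0 := by
  intro k
  induction k with
  | zero =>
    intro m hm g U _ _ _
    have hm1 : m ≠ 0 := by omega
    simp [iteratedDeriv_zero, hu0, zero_pow hm1]
  | succ k ih =>
    intro m hm g U hUopen haU hg
    obtain ⟨n, rfl⟩ : ∃ n, m = n + 1 := ⟨m - 1, by omega⟩
    rw [iteratedDeriv_succ']
    have hg' : ContDiffOn ℝ ∞ (deriv g) U := hg.deriv_of_isOpen hUopen (by simp)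
    set g₂ : ℝ → ℝ := fun s => ((n : ℝ) + 1) * deriv u s * g s + u s * deriv g s with hg₂def
    have hev : deriv (fun s => u s ^ (n + 1) * g s) =ᶠ[𝓝 a] fun s => u s ^ n * g₂ s := by
      filter_upwards [hUopen.mem_nhds haU] with s hs
      have hus : HasDerivAt u (deriv u s) s :=
        ((hu.differentiable (by simp)) s).hasDerivAt
      have hgs : HasDerivAt g (deriv g s) s := by
        have : DifferentiableAt ℝ g s :=
          ((hg s hs).contDiffAt (hUopen.mem_nhds hs)).differentiableAt (by simp)
        exact this.hasDerivAt
      have h1 : HasDerivAt (fun s => u s ^ (n + 1) * g s)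
          ((↑(n + 1) * u s ^ n * deriv u s) * g s + u s ^ (n + 1) * deriv g s) s := by
        simpa [Pi.mul_def, Pi.pow_def] using (hus.pow (n + 1)).mul hgs
      rw [h1.deriv]
      simp only [hg₂def]
      push_cast
      ring
    rw [Filter.EventuallyEq.iteratedDeriv_eq k hev]
    refine ih n (by omega) g₂ U hUopen haU ?_
    have hdu : ContDiff ℝ ∞ (deriv u) := by
      exact (contDiff_infty_iff_deriv.mp hu).2
    exact ((contDiffOn_const.mul (hdu.contDiffOn)).mul hg).add
      ((hu.contDiffOn).mul hg')

theorem stmt_15 (T₁ T₂ : ℝ) (hT : T₁ < T₂) (p : ℕ) (hp : 2 ≤ p)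
    (v w : ℝ → ℝ) (hv : ContDiff ℝ (⊤ : ℕ∞) v) (hv0 : v T₁ = 0) (hv' : deriv v T₁ ≠ 0)
    (hw : ∀ s : ℝ, w s = T₁ + (T₂ - T₁) * (v s)^p / ((v s)^p + (1 - v s)^p)) :
    ∀ k : ℕ, 1 ≤ k → k ≤ p - 1 → iteratedDeriv k w T₁ = 0 := by
  intro k hk1 hkp
  set den : ℝ → ℝ := fun s => (v s) ^ p + (1 - v s) ^ p with hden
  have hdenc : Continuous den := by
    have hvc : Continuous v := hv.continuous
    fun_prop
  have hdensm : ContDiff ℝ ∞ den := by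
    exact ((hv.of_le (by simp)).pow p).add ((contDiff_const.sub (hv.of_le (by simp))).pow p)
  set U : Set ℝ := {s | den s ≠ 0} with hU
  have hUopen : IsOpen U := isOpen_compl_iff.mpr (isClosed_eq hdenc continuous_const)
  have haU : T₁ ∈ U := by
    simp only [hU, Set.mem_setOf_eq, hden, hv0]
    rw [zero_pow (show p ≠ 0 by omega)]
    norm_num
  set g : ℝ → ℝ := fun s => (T₂ - T₁) / den s with hgdef
  have hg : ContDiffOn ℝ ∞ g U := by
    exact ContDiffOn.div contDiffOn_const hdensm.contDiffOn (fun x hx => hx)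
  obtain ⟨k', rfl⟩ : ∃ k', k = k' + 1 := ⟨k - 1, by omega⟩
  have hwfun : w = fun s => T₁ + v s ^ p * g s := by
    funext s
    rw [hw s, hgdef, mul_comm (T₂ - T₁), mul_div_assoc]
  rw [hwfun, iteratedDeriv_succ', deriv_const_add', ← iteratedDeriv_succ']
  exact aux_vanish T₁ v (hv.of_le (by simp)) hv0 (k' + 1) p (by omega) g U hUopen haU hg
end

section
/- For each n ≥ 1 and real t, the quadrature weight R_i^{(n)}(t) = -(2π/n)·Σ_{m=1}^{n-1} (1/m)·cos(m(t - t_i)) - (π/n²)·cos(n(t - t_i)) satisfies the exactness property: for every trigonometric monomial f(τ) = cos(mτ) or sin(mτ) with 0 ≤ m ≤ n-1, Σ_{i=0}^{2n-1} R_i^{(n)}(t)·f(t_i) = ∫₀^{2π} ln(4 sin²((t-τ)/2))·f(τ) dτ, where t_i = iπ/n. -/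
/-!
Write `f τ = cos (m τ - φ)` with `φ = 0` or `φ = π / 2`.

Discrete side: by product-to-sum, `∑ᵢ cos (k (t - tᵢ)) cos (m tᵢ - φ)` is a combination of
sums `∑ᵢ cos (a + z · 2π i / 2n)`, which vanish unless `2n ∣ z` (geometric sums of a root of
unity). For `1 ≤ k ≤ n` and `m < n` only `z = m - k` with `k = m` survives, so only the
frequency `m` of the weight contributes, and the quadrature sum is `-(2π / m) cos (m t - φ)`.

Continuous side: by `2π`-periodicity the integral is the convolution of
`L s = log (4 sin² (s / 2))` with `cos (m · - φ)`, hence `cos (m t - φ)` times the cosine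
coefficient of `L` plus `sin (m t - φ)` times its sine coefficient, which vanishes since
`L (2π - s) = L s`. For `m = 0` the cosine coefficient is Jensen's circle average of
`log |z - 1|`. For `m ≥ 1` put `V s = ∑_{k<m} cos ((2k+1) s / 2) = sin (m s) / (2 sin (s / 2))`:
then `log (2 sin (s / 2)) sin (m s) = (u log u) V` with `u = 2 sin (s / 2)` is continuous on
`[0, 2π]`, vanishes at both ends, and has derivative `cos (s / 2) V s + (m / 2) L s cos (m s)`,
whose first term integrates to `π`.
-/

open Real Finset intervalIntegral

theorem Complex.sum_range_exp_int_mul_two_pi_div (N : ℕ) (hN : N ≠ 0) (z : ℤ) :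
    ∑ i ∈ range N, Complex.exp (z * (2 * π * i / N) * Complex.I) =
      if (N : ℤ) ∣ z then (N : ℂ) else 0 := by
  have hω := Complex.isPrimitiveRoot_exp N hN
  set ω := Complex.exp (2 * π * Complex.I / N)
  have hterm (i : ℕ) : Complex.exp (z * (2 * π * i / N) * Complex.I) = (ω ^ z) ^ i := by
    rw [← Complex.exp_int_mul, ← Complex.exp_nat_mul]
    congr 1
    ring
  simp only [hterm]
  split_ifs with hz
  · simp [(hω.zpow_eq_one_iff_dvd z).2 hz]
  · rw [geom_sum_eq (mt (hω.zpow_eq_one_iff_dvd z).1 hz), ← zpow_natCast, ← zpow_mul,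
      mul_comm, zpow_mul, zpow_natCast, hω.pow_eq_one, one_zpow, sub_self, zero_div]

theorem Real.sum_range_cos_add_int_mul_two_pi_div (N : ℕ) (hN : N ≠ 0) (a : ℝ) (z : ℤ) :
    ∑ i ∈ range N, cos (a + z * (2 * π * i / N)) =
      if (N : ℤ) ∣ z then N * cos a else 0 := by
  have h := congrArg (fun w => (Complex.exp (a * Complex.I) * w).re)
    (Complex.sum_range_exp_int_mul_two_pi_div N hN z)
  simp only [mul_sum, ← Complex.exp_add, ← add_mul, Complex.re_sum] at h
  split_ifs at h ⊢ <;> simpa [← Complex.exp_ofReal_mul_I_re, mul_comm] using h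

theorem Int.dvd_iff_eq_zero_of_abs_lt {N z : ℤ} (hz : |z| < N) : N ∣ z ↔ z = 0 :=
  ⟨fun h => Int.eq_zero_of_abs_lt_dvd h hz, fun h => h ▸ dvd_zero N⟩

theorem sum_range_cos_mul_sub_node_mul_cos (n k m : ℕ) (hk : 1 ≤ k) (hkn : k ≤ n)
    (hmn : m < n) (t φ : ℝ) :
    ∑ i ∈ range (2 * n), cos (k * (t - i * π / n)) * cos (m * (i * π / n) - φ) =
      if k = m then n * cos (m * t - φ) else 0 := by
  have hnode (i : ℕ) : (i : ℝ) * π / n = 2 * π * i / (2 * n : ℕ) := by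
    push_cast
    field_simp
  have hprod (x : ℝ) : cos (k * (t - x)) * cos (m * x - φ) =
      (cos ((k * t - φ) + ((m - k : ℤ) : ℝ) * x) +
        cos ((k * t + φ) + ((-(k + m) : ℤ) : ℝ) * x)) / 2 := by
    push_cast
    rw [show k * t - φ + (m - k) * x = k * (t - x) + (m * x - φ) by ring,
      show k * t + φ + -(k + m) * x = k * (t - x) - (m * x - φ) by ring,
      cos_add (k * (t - x)), cos_sub (k * (t - x))]
    ring
  have hdiff : ((2 * n : ℕ) : ℤ) ∣ (m - k : ℤ) ↔ k = m := by
    rw [Int.dvd_iff_eq_zero_of_abs_lt (by rw [abs_lt]; omega)]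
    omega
  have hsum : ¬ ((2 * n : ℕ) : ℤ) ∣ (-(k + m) : ℤ) := by
    rw [Int.dvd_iff_eq_zero_of_abs_lt (by rw [abs_lt]; omega)]
    omega
  simp only [hnode, hprod, ← sum_div, sum_add_distrib,
    sum_range_cos_add_int_mul_two_pi_div _ (by omega : 2 * n ≠ 0), hdiff, hsum, if_false]
  split_ifs with hkm
  · subst hkm
    push_cast
    ring
  · simp

noncomputable def kussmaulMartensenWeight (n i : ℕ) (s : ℝ) : ℝ :=
  -(2 * π / n) * ∑ k ∈ Icc 1 (n - 1), (1 / (k : ℝ)) * cos (k * (s - i * π / n))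
    - (π / (n : ℝ) ^ 2) * cos (n * (s - i * π / n))

-- For `m = 0` both sides vanish, the right-hand one because `2 * π / 0 = 0`.
theorem sum_kussmaulMartensenWeight_mul_cos (n m : ℕ) (hmn : m < n) (t φ : ℝ) :
    ∑ i ∈ range (2 * n), kussmaulMartensenWeight n i t * cos (m * (i * π / n) - φ) =
      -(2 * π / m) * cos (m * t - φ) := by
  have hfreq : ∀ k ∈ Icc 1 (n - 1), 1 / (k : ℝ) *
      ∑ i ∈ range (2 * n), cos (k * (t - i * π / n)) * cos (m * (i * π / n) - φ) =
        if k = m then 1 / (k : ℝ) * (n * cos (m * t - φ)) else 0 := by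
    intro k hk
    rw [mem_Icc] at hk
    rw [sum_range_cos_mul_sub_node_mul_cos n k m hk.1 (by omega) hmn, mul_ite, mul_zero]
  simp only [kussmaulMartensenWeight, sub_mul, mul_assoc, sum_mul, sum_sub_distrib, ← mul_sum,
    sum_comm (s := range (2 * n))]
  rw [sum_congr rfl hfreq, sum_ite_eq',
    sum_range_cos_mul_sub_node_mul_cos n n m (by omega) le_rfl hmn, if_neg hmn.ne', mul_zero,
    sub_zero]
  rcases Nat.eq_zero_or_pos m with rfl | hm
  · simp
  · have : (n : ℝ) ≠ 0 := by exact_mod_cast (by omega : n ≠ 0)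
    rw [if_pos (mem_Icc.2 ⟨hm, by omega⟩)]
    field_simp

theorem Function.Periodic.intervalIntegral_comp_sub_left {E : Type*} [NormedAddCommGroup E]
    [NormedSpace ℝ E] {f : ℝ → E} {T : ℝ}
    (hf : Function.Periodic f T) (t : ℝ) :
    ∫ τ in 0..T, f (t - τ) = ∫ τ in 0..T, f τ := by
  have h := hf.intervalIntegral_add_eq (t - T) 0
  rw [sub_add_cancel, zero_add] at h
  rw [integral_comp_sub_left, sub_zero, h]

theorem integral_cos_nat_mul_zero_two_pi (j : ℕ) :
    ∫ s in 0..2 * π, cos (j * s) = if j = 0 then 2 * π else 0 := by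
  split_ifs with hj
  · simp [hj]
  · have hj' : (j : ℝ) ≠ 0 := Nat.cast_ne_zero.2 hj
    rw [integral_comp_mul_left (fun s => cos s) hj', integral_cos, mul_zero, sin_zero,
      show (j : ℝ) * (2 * π) = (2 * j : ℕ) * π by push_cast; ring, sin_nat_mul_pi]
    simp

theorem log_four_mul_sin_sq_half (s : ℝ) :
    log (4 * sin (s / 2) ^ 2) = 2 * log (2 * sin (s / 2)) := by
  rw [← Nat.cast_ofNat (R := ℝ) (n := 2), ← log_pow, mul_pow]
  norm_num

theorem intervalIntegrable_log_four_mul_sin_sq_half (a b : ℝ) :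
    IntervalIntegrable (fun s => log (4 * sin (s / 2) ^ 2)) MeasureTheory.volume a b :=
  AnalyticOnNhd.meromorphicOn (fun _ _ => by fun_prop) |>.intervalIntegrable_log

theorem integral_log_four_mul_sin_sq_half : ∫ s in 0..2 * π, log (4 * sin (s / 2) ^ 2) = 0 := by
  have hcirc (s : ℝ) : log (4 * sin (s / 2) ^ 2) = 2 * log ‖circleMap 0 1 s - 1‖ := by
    rw [circleMap_zero, Complex.ofReal_one, one_mul, mul_comm _ Complex.I,
      Complex.norm_exp_I_mul_ofReal_sub_one, Real.norm_eq_abs, log_abs, log_four_mul_sin_sq_half]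
  have h := circleAverage_log_norm_sub_const₁ (a := 1) norm_one
  simp only [circleAverage, smul_eq_mul, mul_eq_zero, inv_eq_zero, two_pi_pos.ne', false_or] at h
  simp only [hcirc, integral_const_mul, h, mul_zero]

theorem integral_log_four_mul_sin_sq_half_mul_sin (m : ℕ) :
    ∫ s in 0..2 * π, log (4 * sin (s / 2) ^ 2) * sin (m * s) = 0 := by
  have hodd (s : ℝ) : log (4 * sin ((2 * π - s) / 2) ^ 2) * sin (m * (2 * π - s)) =
      -(log (4 * sin (s / 2) ^ 2) * sin (m * s)) := by
    rw [show (2 * π - s) / 2 = π - s / 2 by ring, sin_pi_sub, mul_sub, sin_nat_mul_two_pi_sub,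
      mul_neg]
  have h := integral_comp_sub_left (fun s => log (4 * sin (s / 2) ^ 2) * sin (m * s)) (2 * π)
    (a := 0) (b := 2 * π)
  simp only [hodd, integral_neg, sub_self, sub_zero] at h
  linarith

noncomputable def oddHalfCosSum (m : ℕ) (s : ℝ) : ℝ :=
  ∑ k ∈ range m, cos ((2 * k + 1) * s / 2)

theorem sin_nat_mul_eq_two_mul_sin_half_mul_oddHalfCosSum (m : ℕ) (s : ℝ) :
    sin (m * s) = 2 * sin (s / 2) * oddHalfCosSum m s := by
  have hstep (k : ℕ) : 2 * sin (s / 2) * cos ((2 * k + 1) * s / 2) =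
      sin ((k + 1 : ℕ) * s) - sin (k * s) := by
    rw [sin_sub_sin]
    push_cast
    ring_nf
  rw [oddHalfCosSum, mul_sum, sum_congr rfl fun k _ => hstep k,
    sum_range_sub fun k => sin (k * s)]
  simp

theorem integral_cos_half_mul_oddHalfCosSum {m : ℕ} (hm : m ≠ 0) :
    ∫ s in 0..2 * π, cos (s / 2) * oddHalfCosSum m s = π := by
  have hprod (k : ℕ) (s : ℝ) : cos (s / 2) * cos ((2 * k + 1) * s / 2) =
      (cos ((k + 1 : ℕ) * s) + cos (k * s)) / 2 := by
    rw [cos_add_cos]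
    push_cast
    ring_nf
  have hterm (k : ℕ) :
      ∫ s in 0..2 * π, (cos ((k + 1 : ℕ) * s) + cos (k * s)) / 2 =
        if k = 0 then π else 0 := by
    rw [integral_div, integral_add (Continuous.intervalIntegrable (by fun_prop) _ _)
      (Continuous.intervalIntegrable (by fun_prop) _ _), integral_cos_nat_mul_zero_two_pi,
      integral_cos_nat_mul_zero_two_pi]
    split_ifs <;> simp_all
  simp only [oddHalfCosSum, mul_sum, hprod]
  rw [integral_finsetSum fun k _ => Continuous.intervalIntegrable (by fun_prop) _ _,
    sum_congr rfl fun k _ => hterm k, sum_ite_eq', if_pos (mem_range.2 (Nat.pos_of_ne_zero hm))]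

theorem continuous_log_two_mul_sin_half_mul_sin (m : ℕ) :
    Continuous fun s => log (2 * sin (s / 2)) * sin (m * s) := by
  have h (s : ℝ) : log (2 * sin (s / 2)) * sin (m * s) =
      2 * sin (s / 2) * log (2 * sin (s / 2)) * oddHalfCosSum m s := by
    rw [sin_nat_mul_eq_two_mul_sin_half_mul_oddHalfCosSum]
    ring
  simp only [h]
  exact (continuous_mul_log.comp (by fun_prop)).mul (by unfold oddHalfCosSum; fun_prop)

theorem hasDerivAt_log_two_mul_sin_half_mul_sin (m : ℕ) {s : ℝ} (hs : sin (s / 2) ≠ 0) :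
    HasDerivAt (fun s => log (2 * sin (s / 2)) * sin (m * s))
      (cos (s / 2) * oddHalfCosSum m s + m / 2 * (log (4 * sin (s / 2) ^ 2) * cos (m * s))) s := by
  have hlog : HasDerivAt (fun s => log (2 * sin (s / 2))) (cos (s / 2) / (2 * sin (s / 2))) s := by
    refine (((hasDerivAt_id s).div_const 2).sin.const_mul 2).log (by simpa using hs)
      |>.congr_deriv ?_
    simp only [id]
    ring
  have hsin : HasDerivAt (fun s => sin (m * s)) (cos (m * s) * m) s :=
    ((hasDerivAt_id s).const_mul (m : ℝ)).sin.congr_deriv (by simp)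
  refine (hlog.mul hsin).congr_deriv ?_
  rw [log_four_mul_sin_sq_half, sin_nat_mul_eq_two_mul_sin_half_mul_oddHalfCosSum]
  field_simp

-- For `m = 0` the right-hand side is `0`, as `2 * π / 0 = 0`.
theorem integral_log_four_mul_sin_sq_half_mul_cos (m : ℕ) :
    ∫ s in 0..2 * π, log (4 * sin (s / 2) ^ 2) * cos (m * s) = -(2 * π / m) := by
  rcases eq_or_ne m 0 with rfl | hm
  · simpa using integral_log_four_mul_sin_sq_half
  have hV : IntervalIntegrable (fun s => cos (s / 2) * oddHalfCosSum m s) MeasureTheory.volume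
      0 (2 * π) :=
    Continuous.intervalIntegrable (by unfold oddHalfCosSum; fun_prop) _ _
  have hL : IntervalIntegrable (fun s => log (4 * sin (s / 2) ^ 2) * cos (m * s))
      MeasureTheory.volume 0 (2 * π) :=
    (intervalIntegrable_log_four_mul_sin_sq_half _ _).mul_continuousOn (by fun_prop)
  have hFTC := integral_eq_sub_of_hasDerivAt_of_le two_pi_pos.le
    (continuous_log_two_mul_sin_half_mul_sin m).continuousOn
    (fun s hs => hasDerivAt_log_two_mul_sin_half_mul_sin m
      (sin_pos_of_pos_of_lt_pi (by linarith [hs.1]) (by linarith [hs.2])).ne')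
    (hV.add (hL.const_mul _))
  rw [integral_add hV (hL.const_mul _), integral_const_mul,
    integral_cos_half_mul_oddHalfCosSum hm] at hFTC
  simp only [ne_eq, OfNat.ofNat_ne_zero, not_false_eq_true, mul_div_cancel_left₀, sin_pi,
    mul_zero, log_zero, zero_mul, zero_div, sin_zero, sub_self] at hFTC
  set I := ∫ s in 0..2 * π, log (4 * sin (s / 2) ^ 2) * cos (m * s)
  have : (m : ℝ) ≠ 0 := Nat.cast_ne_zero.2 hm
  field_simp
  linear_combination 2 * hFTC

theorem integral_log_four_mul_sin_sq_sub_mul_cos (m : ℕ) (t φ : ℝ) :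
    ∫ τ in 0..2 * π, log (4 * sin ((t - τ) / 2) ^ 2) * cos (m * τ - φ) =
      -(2 * π / m) * cos (m * t - φ) := by
  have hper : Function.Periodic
      (fun s => log (4 * sin (s / 2) ^ 2) * cos (m * (t - s) - φ)) (2 * π) := by
    intro s
    simp only
    rw [show (s + 2 * π) / 2 = s / 2 + π by ring, sin_add_pi, neg_sq,
      show m * (t - (s + 2 * π)) - φ = (m * (t - s) - φ) - m * (2 * π) by ring,
      cos_sub_nat_mul_two_pi]
  have hexpand (s : ℝ) : log (4 * sin (s / 2) ^ 2) * cos (m * (t - s) - φ) =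
      cos (m * t - φ) * (log (4 * sin (s / 2) ^ 2) * cos (m * s)) +
        sin (m * t - φ) * (log (4 * sin (s / 2) ^ 2) * sin (m * s)) := by
    rw [show m * (t - s) - φ = (m * t - φ) - m * s by ring, cos_sub]
    ring
  have hL (g : ℝ → ℝ) (hg : Continuous g) :
      IntervalIntegrable (fun s => log (4 * sin (s / 2) ^ 2) * g s)
        MeasureTheory.volume 0 (2 * π) :=
    (intervalIntegrable_log_four_mul_sin_sq_half _ _).mul_continuousOn hg.continuousOn
  have hshift := hper.intervalIntegral_comp_sub_left t
  simp only [sub_sub_cancel] at hshift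
  rw [hshift]
  simp only [hexpand]
  rw [integral_add ((hL _ (by fun_prop)).const_mul _) ((hL _ (by fun_prop)).const_mul _),
    integral_const_mul, integral_const_mul, integral_log_four_mul_sin_sq_half_mul_cos,
    integral_log_four_mul_sin_sq_half_mul_sin]
  ring

open Real in
theorem stmt_16 (n : ℕ) (hn : 1 ≤ n) (t : ℝ)
    (tn : ℕ → ℝ) (htn : ∀ i, tn i = (i : ℝ) * π / n)
    (R : ℕ → ℝ → ℝ)
    (hR : ∀ i s, R i s =
      -(2 * π / n) * ∑ m ∈ Finset.Icc 1 (n - 1), (1 / (m : ℝ)) * Real.cos (m * (s - tn i))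
      - (π / (n : ℝ)^2) * Real.cos (n * (s - tn i)))
    (m : ℕ) (hm : m ≤ n - 1) (f : ℝ → ℝ)
    (hf : (∀ τ, f τ = Real.cos (m * τ)) ∨ (∀ τ, f τ = Real.sin (m * τ))) :
    ∑ i ∈ Finset.range (2 * n), R i t * f (tn i) =
      ∫ τ in (0:ℝ)..(2 * π), Real.log (4 * Real.sin ((t - τ) / 2)^2) * f τ := by
  obtain ⟨φ, hφ⟩ : ∃ φ, ∀ τ, f τ = cos (m * τ - φ) := by
    rcases hf with hf | hf
    · exact ⟨0, fun τ => by rw [hf, sub_zero]⟩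
    · exact ⟨π / 2, fun τ => by rw [hf, cos_sub_pi_div_two]⟩
  have hR' (i : ℕ) : R i t = kussmaulMartensenWeight n i t := by
    rw [hR, htn, kussmaulMartensenWeight]
  simp only [hφ, hR', htn]
  rw [sum_kussmaulMartensenWeight_mul_cos n m (by omega) t φ,
    integral_log_four_mul_sin_sq_sub_mul_cos]
end
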